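/- Let Y ∈ ℝ^{d×m} have SVD Y = UΣVᵀ with singular values σ₁,…,σ_r, and define the adaptive dictionary atoms D_j = u_j v_jᵀ. For λ ≥ 0, let α̂ minimize α ↦ (1/2)‖Y − Σⱼ αⱼ D_j‖_F² + λ‖α‖₁ over α ∈ ℝ^r with α ≥ 0 entrywise, and let X̂ minimize X ↦ (1/2)‖Y − X‖_F² + λ‖X‖_* over ℝ^{d×m}. Then Σⱼ α̂ⱼ D_j = X̂, i.e., group-based ℓ₁ sparse coding under the adaptive dictionary is equivalent to nuclear norm minimization. -/

import Mathlib

/-!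
In the singular basis of `Y` both problems decouple. Since `∑ⱼ αⱼ Dⱼ = U diag(α) Vᵀ`, the
sparse-coding objective is `∑ⱼ ½(σⱼ - αⱼ)² + λαⱼ`, minimised coordinatewise by the soft threshold
`τⱼ = max(σⱼ - λ, 0)`. For the nuclear-norm problem, `G = Y - U diag(τ) Vᵀ = U diag(min(λ, σ)) Vᵀ`
has operator norm at most `λ`, so `tr(GᵀX) ≤ λ‖X‖_*`, with equality at `X = U diag(τ) Vᵀ`.
Expanding `‖Y - X‖_F² = ‖G - (X - U diag(τ) Vᵀ)‖_F²` then shows that the objective exceeds its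
value at `U diag(τ) Vᵀ` by at least `½‖X - U diag(τ) Vᵀ‖_F²`, so that matrix is the unique
minimiser; both minimisers are therefore `U diag(τ) Vᵀ`.
-/

open Matrix Finset

/-- Nuclear norm: trace of the positive semidefinite square root of `XᵀX`. -/
noncomputable def nuclearNorm {d m : ℕ} (X : Matrix (Fin d) (Fin m) ℝ) : ℝ :=
  ((Matrix.posSemidef_conjTranspose_mul_self X).1.eigenvectorUnitary.1 *
      Matrix.diagonal (Real.sqrt ∘ (Matrix.posSemidef_conjTranspose_mul_self X).1.eigenvalues) *
      (star (Matrix.posSemidef_conjTranspose_mul_self X).1.eigenvectorUnitary :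
        Matrix (Fin m) (Fin m) ℝ)).trace

namespace Matrix

section OrthonormalColumns

variable {R : Type*} [CommRing R] {l m n : Type*} [Fintype n] [DecidableEq n]

theorem sum_smul_vecMulVec_col_eq_mul_diagonal_mul_transpose (U : Matrix l n R)
    (V : Matrix m n R) (c : n → R) :
    ∑ j, c j • vecMulVec (fun i => U i j) (fun k => V k j) = U * diagonal c * Vᵀ := by
  ext i k
  rw [mul_apply, Matrix.sum_apply]
  simp [mul_diagonal, vecMulVec_apply, mul_comm, mul_left_comm]

theorem mul_diagonal_mul_transpose_sub (U : Matrix l n R) (V : Matrix m n R)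
    (a b : n → R) : U * diagonal a * Vᵀ - U * diagonal b * Vᵀ = U * diagonal (a - b) * Vᵀ := by
  rw [← Matrix.sub_mul, ← Matrix.mul_sub, diagonal_sub]
  rfl

theorem trace_mul_diagonal_mul_transpose [Fintype m] {V : Matrix m n R} (hV : Vᵀ * V = 1)
    (c : n → R) : (V * diagonal c * Vᵀ).trace = ∑ j, c j := by
  rw [trace_mul_comm, ← Matrix.mul_assoc, hV, Matrix.one_mul, trace_diagonal]

theorem transpose_mul_diagonal_mul_transpose_mul [Fintype l] {U : Matrix l n R}
    (hU : Uᵀ * U = 1) (V : Matrix m n R) (a b : n → R) :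
    (U * diagonal a * Vᵀ)ᵀ * (U * diagonal b * Vᵀ) = V * diagonal (a * b) * Vᵀ := by
  simp only [transpose_mul, transpose_transpose, diagonal_transpose, Matrix.mul_assoc]
  rw [← Matrix.mul_assoc Uᵀ, hU, Matrix.one_mul, ← Matrix.mul_assoc (diagonal a),
    diagonal_mul_diagonal]
  rfl

end OrthonormalColumns

theorem trace_transpose_mul_sub_self {R : Type*} [CommRing R] {m n : Type*} [Fintype m]
    [Fintype n] (A B : Matrix m n R) :
    ((A - B)ᵀ * (A - B)).trace = (Aᵀ * A).trace - 2 * (Aᵀ * B).trace + (Bᵀ * B).trace := by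
  have hBA : (Bᵀ * A).trace = (Aᵀ * B).trace := by
    rw [← trace_transpose, transpose_mul, transpose_transpose]
  simp only [transpose_sub, Matrix.sub_mul, Matrix.mul_sub, trace_sub, hBA]
  ring

theorem trace_transpose_mul_self_nonneg {m n : Type*} [Fintype m] [Fintype n]
    (A : Matrix m n ℝ) : 0 ≤ (Aᵀ * A).trace :=
  (posSemidef_conjTranspose_mul_self A).trace_nonneg

theorem trace_transpose_mul_le_sum_sqrt_diag {m n : Type*} [Fintype m] [Fintype n]
    (A B : Matrix m n ℝ) :
    (Aᵀ * B).trace ≤ ∑ j, √((Aᵀ * A) j j) * √((Bᵀ * B) j j) := by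
  simp only [trace, diag, mul_apply, transpose_apply, ← sq]
  gcongr with j
  exact Real.sum_mul_le_sqrt_mul_sqrt _ _ _

theorem posSemidef_one_sub_mul_transpose {m n : Type*} [Fintype m] [Fintype n] [DecidableEq m]
    [DecidableEq n] {V : Matrix m n ℝ} (hV : Vᵀ * V = 1) : (1 - V * Vᵀ).PosSemidef := by
  have hidem : (1 - V * Vᵀ)ᴴ * (1 - V * Vᵀ) = 1 - V * Vᵀ := by
    simp only [conjTranspose_eq_transpose_of_trivial, transpose_sub, transpose_one, transpose_mul,
      transpose_transpose, Matrix.sub_mul, Matrix.mul_sub, Matrix.one_mul, Matrix.mul_one,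
      Matrix.mul_assoc]
    rw [← Matrix.mul_assoc Vᵀ, hV, Matrix.one_mul]
    abel
  exact hidem ▸ posSemidef_conjTranspose_mul_self (1 - V * Vᵀ)

theorem posSemidef_mul_diagonal_mul_transpose {m n : Type*} [Fintype m] [Fintype n]
    [DecidableEq n] (V : Matrix m n ℝ) {c : n → ℝ} (hc : ∀ j, 0 ≤ c j) :
    (V * diagonal c * Vᵀ).PosSemidef := by
  simpa only [conjTranspose_eq_transpose_of_trivial] using
    (posSemidef_diagonal_iff.mpr hc).mul_mul_conjTranspose_same V

theorem posSemidef_sq_smul_one_sub_transpose_mul_self {l m n : Type*} [Fintype l] [Fintype m]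
    [Fintype n] [DecidableEq m] [DecidableEq n] {U : Matrix l n ℝ} {V : Matrix m n ℝ}
    (hU : Uᵀ * U = 1) (hV : Vᵀ * V = 1) {b : n → ℝ} {c : ℝ} (hb : ∀ j, |b j| ≤ c) :
    (c ^ 2 • 1 - (U * diagonal b * Vᵀ)ᵀ * (U * diagonal b * Vᵀ)).PosSemidef := by
  have hsplit : c ^ 2 • 1 - (U * diagonal b * Vᵀ)ᵀ * (U * diagonal b * Vᵀ)
      = c ^ 2 • (1 - V * Vᵀ) + V * diagonal (fun j => c ^ 2 - b j * b j) * Vᵀ := by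
    have hdiag : diagonal (fun j => c ^ 2 - b j * b j) = c ^ 2 • 1 - diagonal (b * b) := by
      ext i j
      by_cases h : i = j <;> simp [h]
    rw [transpose_mul_diagonal_mul_transpose_mul hU, hdiag]
    simp only [Matrix.mul_sub, Matrix.sub_mul, Matrix.mul_smul, Matrix.smul_mul, Matrix.mul_one,
      smul_sub]
    abel
  rw [hsplit]
  refine ((posSemidef_one_sub_mul_transpose hV).smul (sq_nonneg c)).add
    (posSemidef_mul_diagonal_mul_transpose V fun j => ?_)
  nlinarith [abs_mul_abs_self (b j), abs_nonneg (b j), hb j]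

end Matrix

open scoped MatrixOrder

theorem nuclearNorm_eq_sum_sqrt_eigenvalues {d m : ℕ} (X : Matrix (Fin d) (Fin m) ℝ) :
    nuclearNorm X = ∑ j, √((posSemidef_conjTranspose_mul_self X).1.eigenvalues j) := by
  rw [nuclearNorm, trace_mul_comm, ← Matrix.mul_assoc, Unitary.coe_star_mul_self, Matrix.one_mul,
    trace_diagonal]
  rfl

theorem nuclearNorm_eq_trace_cfcSqrt {d m : ℕ} (X : Matrix (Fin d) (Fin m) ℝ) :
    nuclearNorm X = (CFC.sqrt (Xᴴ * X)).trace := by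
  have hA := posSemidef_conjTranspose_mul_self X
  rw [nuclearNorm, CFC.sqrt_eq_cfc, cfc_nnreal_eq_real _ (Xᴴ * X), hA.1.cfc_eq]
  simp only [IsHermitian.cfc, Unitary.conjStarAlgAut_apply]
  congr 4
  funext j
  simp only [Function.comp_apply, RCLike.ofReal_real_eq_id, id, Real.coe_sqrt,
    Real.coe_toNNReal _ (hA.eigenvalues_nonneg j)]

theorem nuclearNorm_eq_trace_of_mul_self_eq {d m : ℕ} {X : Matrix (Fin d) (Fin m) ℝ}
    {S : Matrix (Fin m) (Fin m) ℝ} (hS : S.PosSemidef) (hSX : S * S = Xᵀ * X) :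
    nuclearNorm X = S.trace := by
  rw [nuclearNorm_eq_trace_cfcSqrt, conjTranspose_eq_transpose_of_trivial,
    CFC.sqrt_unique hSX hS.nonneg]

theorem trace_transpose_mul_le_mul_nuclearNorm {d m : ℕ} {W : Matrix (Fin d) (Fin m) ℝ} {c : ℝ}
    (hc : 0 ≤ c) (hW : (c ^ 2 • 1 - Wᵀ * W).PosSemidef) (X : Matrix (Fin d) (Fin m) ℝ) :
    (Wᵀ * X).trace ≤ c * nuclearNorm X := by
  -- Cauchy–Schwarz column by column, in an orthonormal eigenbasis `Q` of `XᵀX`.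
  set hA := (posSemidef_conjTranspose_mul_self X).1
  set Q : Matrix (Fin m) (Fin m) ℝ := (hA.eigenvectorUnitary : Matrix (Fin m) (Fin m) ℝ)
  set μ := hA.eigenvalues
  have hQ : Qᵀ * Q = 1 := Unitary.coe_star_mul_self hA.eigenvectorUnitary
  have hQ' : Q * Qᵀ = 1 := Unitary.coe_mul_star_self hA.eigenvectorUnitary
  have hXQ : (X * Q)ᵀ * (X * Q) = diagonal μ := by
    have hspec : Xᴴ * X = Q * diagonal μ * Qᵀ := by
      have h := hA.spectral_theorem
      rwa [Unitary.conjStarAlgAut_apply, star_eq_conjTranspose,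
        conjTranspose_eq_transpose_of_trivial (hA.eigenvectorUnitary : Matrix (Fin m) (Fin m) ℝ),
        RCLike.ofReal_real_eq_id, Function.id_comp] at h
    calc (X * Q)ᵀ * (X * Q) = Qᵀ * (Xᴴ * X) * Q := by
          rw [conjTranspose_eq_transpose_of_trivial]; simp only [transpose_mul, Matrix.mul_assoc]
      _ = (Qᵀ * Q) * diagonal μ * (Qᵀ * Q) := by
        rw [hspec]; simp only [Matrix.mul_assoc]
      _ = diagonal μ := by rw [hQ, Matrix.one_mul, Matrix.mul_one]
  have hWQ : ∀ j, ((W * Q)ᵀ * (W * Q)) j j ≤ c ^ 2 := by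
    intro j
    have hconj : Qᴴ * (c ^ 2 • 1 - Wᵀ * W) * Q = c ^ 2 • 1 - (W * Q)ᵀ * (W * Q) := by
      simp only [conjTranspose_eq_transpose_of_trivial, Matrix.mul_sub, Matrix.sub_mul,
        Matrix.mul_smul, Matrix.smul_mul, Matrix.mul_one, hQ, transpose_mul, Matrix.mul_assoc]
    have h := (hW.conjTranspose_mul_mul_same Q).diag_nonneg (i := j)
    rw [hconj] at h
    simpa using h
  calc (Wᵀ * X).trace = ((W * Q)ᵀ * (X * Q)).trace := by
        rw [transpose_mul, Matrix.mul_assoc, trace_mul_comm Qᵀ, Matrix.mul_assoc, Matrix.mul_assoc,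
          hQ', Matrix.mul_one]
    _ ≤ ∑ j, √(((W * Q)ᵀ * (W * Q)) j j) * √(((X * Q)ᵀ * (X * Q)) j j) :=
        trace_transpose_mul_le_sum_sqrt_diag _ _
    _ ≤ ∑ j, c * √(μ j) := by
        rw [hXQ]
        gcongr with j
        · exact (Real.sqrt_le_sqrt (hWQ j)).trans_eq (Real.sqrt_sq hc)
        · rw [diagonal_apply_eq]
    _ = c * nuclearNorm X := by rw [nuclearNorm_eq_sum_sqrt_eigenvalues, mul_sum]

theorem nuclearNorm_mul_diagonal_mul_transpose {d m r : ℕ} {U : Matrix (Fin d) (Fin r) ℝ}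
    {V : Matrix (Fin m) (Fin r) ℝ} (hU : Uᵀ * U = 1) (hV : Vᵀ * V = 1) {c : Fin r → ℝ}
    (hc : ∀ j, 0 ≤ c j) : nuclearNorm (U * diagonal c * Vᵀ) = ∑ j, c j := by
  have hsymm : (V * diagonal c * Vᵀ)ᵀ = V * diagonal c * Vᵀ := by
    simp only [transpose_mul, transpose_transpose, diagonal_transpose, Matrix.mul_assoc]
  rw [nuclearNorm_eq_trace_of_mul_self_eq (posSemidef_mul_diagonal_mul_transpose V hc),
    trace_mul_diagonal_mul_transpose hV]
  nth_rw 1 [← hsymm]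
  rw [transpose_mul_diagonal_mul_transpose_mul hU, transpose_mul_diagonal_mul_transpose_mul hV]

def softThreshold (lam s : ℝ) : ℝ := max (s - lam) 0

theorem softThreshold_nonneg (lam s : ℝ) : 0 ≤ softThreshold lam s := le_max_right _ _

theorem sub_softThreshold (lam s : ℝ) : s - softThreshold lam s = min lam s := by
  rw [softThreshold, ← min_sub_sub_left, sub_sub_cancel, sub_zero]

theorem min_mul_softThreshold (lam s : ℝ) :
    min lam s * softThreshold lam s = lam * softThreshold lam s := by
  rcases le_total lam s with h | h
  · rw [min_eq_left h]
  · rw [softThreshold, max_eq_right (by linarith), mul_zero, mul_zero]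

theorem softThreshold_optimality (lam s : ℝ) {a : ℝ} (ha : 0 ≤ a) :
    (1 / 2) * (s - softThreshold lam s) ^ 2 + lam * softThreshold lam s
        + (1 / 2) * (a - softThreshold lam s) ^ 2 ≤ (1 / 2) * (s - a) ^ 2 + lam * a := by
  rcases le_total lam s with h | h
  · rw [softThreshold, max_eq_left (by linarith)]; nlinarith
  · rw [softThreshold, max_eq_right (by linarith)]; nlinarith

theorem eq_softThreshold_of_forall_le {ι : Type*} [Fintype ι] {lam : ℝ} {σ αhat : ι → ℝ}
    (hαhat : ∀ j, 0 ≤ αhat j)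
    (hmin : ∀ α : ι → ℝ, (∀ j, 0 ≤ α j) →
      (1 / 2) * ∑ j, (σ j - αhat j) ^ 2 + lam * ∑ j, |αhat j| ≤
        (1 / 2) * ∑ j, (σ j - α j) ^ 2 + lam * ∑ j, |α j|) :
    αhat = fun j => softThreshold lam (σ j) := by
  have hτ := hmin (fun j => softThreshold lam (σ j)) fun j => softThreshold_nonneg _ _
  have hscalar := sum_le_sum fun j (_ : j ∈ univ) =>
    softThreshold_optimality lam (σ j) (hαhat j)
  simp only [abs_of_nonneg (hαhat _), abs_of_nonneg (softThreshold_nonneg _ _), sum_add_distrib,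
    ← mul_sum] at hτ hscalar
  have hdist : ∑ j, (αhat j - softThreshold lam (σ j)) ^ 2 = 0 :=
    le_antisymm (by linarith) (by positivity)
  rw [sum_eq_zero_iff_of_nonneg fun j _ => sq_nonneg _] at hdist
  funext j
  exact sub_eq_zero.mp (pow_eq_zero_iff two_ne_zero |>.mp (hdist j (mem_univ j)))

noncomputable def nuclearProxObjective {d m : ℕ} (lam : ℝ) (Y X : Matrix (Fin d) (Fin m) ℝ) :
    ℝ :=
  (1 / 2) * ((Y - X)ᵀ * (Y - X)).trace + lam * nuclearNorm X

section SingularValueThresholding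

variable {d m r : ℕ} {U : Matrix (Fin d) (Fin r) ℝ} {V : Matrix (Fin m) (Fin r) ℝ}
  {σ : Fin r → ℝ} {lam : ℝ} {Y Xs : Matrix (Fin d) (Fin m) ℝ}

theorem nuclearProxObjective_add_le (hU : Uᵀ * U = 1) (hV : Vᵀ * V = 1) (hσ : ∀ j, 0 ≤ σ j)
    (hlam : 0 ≤ lam) (hY : Y = U * diagonal σ * Vᵀ)
    (hXs : Xs = U * diagonal (fun j => softThreshold lam (σ j)) * Vᵀ)
    (X : Matrix (Fin d) (Fin m) ℝ) :
    nuclearProxObjective lam Y Xs + (1 / 2) * ((X - Xs)ᵀ * (X - Xs)).trace ≤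
      nuclearProxObjective lam Y X := by
  set G := U * diagonal (fun j => min lam (σ j)) * Vᵀ
  have hG : Y - Xs = G := by
    rw [hY, hXs, mul_diagonal_mul_transpose_sub]
    simp only [Pi.sub_def, sub_softThreshold, G]
  have hdual : (Gᵀ * X).trace ≤ lam * nuclearNorm X :=
    trace_transpose_mul_le_mul_nuclearNorm hlam
      (posSemidef_sq_smul_one_sub_transpose_mul_self hU hV fun j =>
        abs_le.mpr ⟨by linarith [le_min hlam (hσ j)], min_le_left _ _⟩) X
  have hGXs : (Gᵀ * Xs).trace = lam * nuclearNorm Xs := by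
    rw [hXs, transpose_mul_diagonal_mul_transpose_mul hU, trace_mul_diagonal_mul_transpose hV,
      nuclearNorm_mul_diagonal_mul_transpose hU hV fun j => softThreshold_nonneg _ _, mul_sum]
    exact sum_congr rfl fun j _ => min_mul_softThreshold lam (σ j)
  have hYX : Y - X = G - (X - Xs) := by rw [← hG]; abel
  simp only [nuclearProxObjective]
  rw [hG, hYX, trace_transpose_mul_sub_self G (X - Xs), Matrix.mul_sub Gᵀ X Xs, trace_sub, hGXs]
  linarith

theorem eq_of_forall_nuclearProxObjective_le (hU : Uᵀ * U = 1) (hV : Vᵀ * V = 1)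
    (hσ : ∀ j, 0 ≤ σ j) (hlam : 0 ≤ lam) (hY : Y = U * diagonal σ * Vᵀ)
    {Xhat : Matrix (Fin d) (Fin m) ℝ}
    (hXhat : ∀ X, nuclearProxObjective lam Y Xhat ≤ nuclearProxObjective lam Y X) :
    Xhat = U * diagonal (fun j => softThreshold lam (σ j)) * Vᵀ := by
  set Xs := U * diagonal (fun j => softThreshold lam (σ j)) * Vᵀ
  have hgrowth := nuclearProxObjective_add_le hU hV hσ hlam hY rfl Xhat
  have hdist : ((Xhat - Xs)ᵀ * (Xhat - Xs)).trace = 0 :=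
    le_antisymm (by linarith [hXhat Xs]) (trace_transpose_mul_self_nonneg _)
  rwa [← conjTranspose_eq_transpose_of_trivial, trace_conjTranspose_mul_self_eq_zero_iff,
    sub_eq_zero] at hdist

end SingularValueThresholding

/-- Group-based ℓ₁ sparse coding under the adaptive SVD dictionary is equivalent to
nuclear norm minimization: the synthesized minimizer coincides with the nuclear-norm
minimizer. -/
theorem sparse_coding_eq_nuclear_norm_min (d m r : ℕ)
    (Y : Matrix (Fin d) (Fin m) ℝ)
    (U : Matrix (Fin d) (Fin r) ℝ) (V : Matrix (Fin m) (Fin r) ℝ)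
    (hU : Uᵀ * U = 1) (hV : Vᵀ * V = 1)
    (σ : Fin r → ℝ) (hσ : ∀ i, 0 ≤ σ i)
    (hY : Y = U * Matrix.diagonal σ * Vᵀ)
    (D : Fin r → Matrix (Fin d) (Fin m) ℝ)
    (hD : ∀ j, D j = Matrix.vecMulVec (fun i => U i j) (fun l => V l j))
    (lam : ℝ) (hlam : 0 ≤ lam)
    (αhat : Fin r → ℝ) (hαhat_nonneg : ∀ j, 0 ≤ αhat j)
    (hαhat : ∀ α : Fin r → ℝ, (∀ j, 0 ≤ α j) →
      (1/2) * ((Y - ∑ j, αhat j • D j)ᵀ * (Y - ∑ j, αhat j • D j)).trace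
        + lam * ∑ j, |αhat j| ≤
      (1/2) * ((Y - ∑ j, α j • D j)ᵀ * (Y - ∑ j, α j • D j)).trace
        + lam * ∑ j, |α j|)
    (Xhat : Matrix (Fin d) (Fin m) ℝ)
    (hXhat : ∀ X : Matrix (Fin d) (Fin m) ℝ,
      (1/2) * ((Y - Xhat)ᵀ * (Y - Xhat)).trace + lam * nuclearNorm Xhat ≤
      (1/2) * ((Y - X)ᵀ * (Y - X)).trace + lam * nuclearNorm X) :
    (∑ j, αhat j • D j) = Xhat := by
  have hsynth (c : Fin r → ℝ) : ∑ j, c j • D j = U * diagonal c * Vᵀ := by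
    simp only [hD, sum_smul_vecMulVec_col_eq_mul_diagonal_mul_transpose]
  have hresidual (c : Fin r → ℝ) :
      ((Y - U * diagonal c * Vᵀ)ᵀ * (Y - U * diagonal c * Vᵀ)).trace = ∑ j, (σ j - c j) ^ 2 := by
    rw [hY, mul_diagonal_mul_transpose_sub, transpose_mul_diagonal_mul_transpose_mul hU,
      trace_mul_diagonal_mul_transpose hV]
    simp only [Pi.mul_apply, Pi.sub_apply, sq]
  have hα : αhat = fun j => softThreshold lam (σ j) :=
    eq_softThreshold_of_forall_le hαhat_nonneg fun α hα => by
      simpa only [hsynth, hresidual] using hαhat α hα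
  rw [hsynth, hα, eq_of_forall_nuclearProxObjective_le hU hV hσ hlam hY hXhat]
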